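/- arXiv:1308.4765 — 6 statements merged into one kernel-verified Lean document; each statement's English description precedes it below -/
import Mathlib

section
/- Let $G$ be a finite simple graph on vertex set $V$ and let $G'$ be the graph obtained from $G$ by, for each vertex $v \in V$, attaching a new complete graph $K_{k_v}$ (with $k_v \geq 2$) identified with $v$ at one vertex. Then $G'$ is unmixed: all minimal vertex covers of $G'$ have the same cardinality, namely $\sum_{v \in V} (k_v - 1)$. -/
/-- A vertex cover of a graph: a set of vertices meeting every edge. -/
def IsVertexCover {V : Type*} (G : SimpleGraph V) (C : Finset V) : Prop :=
  ∀ ⦃u v : V⦄, G.Adj u v → u ∈ C ∨ v ∈ C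

/-- A minimal vertex cover: no proper subset is a vertex cover. -/
def IsMinimalVertexCover {V : Type*} (G : SimpleGraph V) (C : Finset V) : Prop :=
  IsVertexCover G C ∧ ∀ C' ⊆ C, IsVertexCover G C' → C' = C

/-- The graph obtained from `G` by attaching, at each vertex `v`, a complete graph
`K_{k v}` identified with `v` at one vertex (so `k v - 1` new vertices are added,
forming together with `v` a clique on `k v` vertices). -/
def attachCliques {V : Type*} (G : SimpleGraph V) (k : V → ℕ) :
    SimpleGraph (V ⊕ (Σ v : V, Fin (k v - 1))) :=
  SimpleGraph.fromRel (fun a b =>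
    (∃ u w, a = Sum.inl u ∧ b = Sum.inl w ∧ G.Adj u w) ∨
    (∃ (v : V) (i : Fin (k v - 1)), a = Sum.inl v ∧ b = Sum.inr ⟨v, i⟩) ∨
    (∃ (v : V) (i j : Fin (k v - 1)), a = Sum.inr ⟨v, i⟩ ∧ b = Sum.inr ⟨v, j⟩))

/-- Attaching a complete graph `K_{k v}` (with `k v ≥ 2`) to each vertex `v` of a finite
simple graph `G` yields an unmixed graph: every minimal vertex cover of the new graph has
cardinality `∑ v, (k v - 1)`. -/
theorem stmt5 {V : Type*} [Fintype V] [DecidableEq V] (G : SimpleGraph V) (k : V → ℕ)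
    (hk : ∀ v, 2 ≤ k v) (C : Finset (V ⊕ (Σ v : V, Fin (k v - 1))))
    (hC : IsMinimalVertexCover (attachCliques G k) C) :
    C.card = ∑ v : V, (k v - 1) := by
  classical
  obtain ⟨hcov, hmin⟩ := hC
  set f : V ⊕ (Σ v : V, Fin (k v - 1)) → V := Sum.elim id (fun p => p.1) with hf
  have hkey : C.card = ∑ v : V, (C.filter (fun w => f w = v)).card :=
    Finset.card_eq_sum_card_fiberwise (fun x _ => Finset.mem_univ _)
  rw [hkey]
  apply Finset.sum_congr rfl
  intro v _
  -- basic adjacency facts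
  have hadj1 : ∀ i : Fin (k v - 1),
      (attachCliques G k).Adj (Sum.inl v) (Sum.inr ⟨v, i⟩) := by
    intro i
    rw [attachCliques, SimpleGraph.fromRel_adj]
    exact ⟨by simp, Or.inl (Or.inr (Or.inl ⟨v, i, rfl, rfl⟩))⟩
  have hadj2 : ∀ i j : Fin (k v - 1), i ≠ j →
      (attachCliques G k).Adj (Sum.inr ⟨v, i⟩) (Sum.inr ⟨v, j⟩) := by
    intro i j hij
    rw [attachCliques, SimpleGraph.fromRel_adj]
    exact ⟨by simp [hij], Or.inl (Or.inr (Or.inr ⟨v, i, j, rfl, rfl⟩))⟩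
  -- neighbors of an attached vertex
  have hnbr : ∀ (i : Fin (k v - 1)) (b : V ⊕ (Σ v : V, Fin (k v - 1))),
      (attachCliques G k).Adj (Sum.inr ⟨v, i⟩) b →
      b = Sum.inl v ∨ ∃ j : Fin (k v - 1), b = Sum.inr ⟨v, j⟩ := by
    intro i b hb
    rw [attachCliques, SimpleGraph.fromRel_adj] at hb
    obtain ⟨-, h | h⟩ := hb
    · rcases h with ⟨u, w, ha, -, -⟩ | ⟨v', i', ha, -⟩ | ⟨v', i', j', ha, hb'⟩
      · exact absurd ha (by simp)
      · exact absurd ha (by simp)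
      · have hv : v = v' := by
          have := congrArg f ha; simpa [f] using this
        subst hv
        exact Or.inr ⟨j', hb'⟩
    · rcases h with ⟨u, w, hb', ha, -⟩ | ⟨v', i', hb', ha⟩ | ⟨v', i', j', hb', ha⟩
      · exact absurd ha (by simp)
      · have hv : v = v' := by
          have := congrArg f ha; simpa [f] using this
        subst hv
        exact Or.inl hb'
      · have hv : v = v' := by
          have := congrArg f ha; simpa [f] using this
        subst hv
        exact Or.inr ⟨i', hb'⟩
  -- the full clique at v as a finset
  set T : Finset (V ⊕ (Σ v : V, Fin (k v - 1))) :=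
    insert (Sum.inl v) (Finset.univ.image fun j : Fin (k v - 1) => Sum.inr ⟨v, j⟩) with hTdef
  have hinj : Function.Injective fun j : Fin (k v - 1) =>
      (Sum.inr ⟨v, j⟩ : V ⊕ (Σ v : V, Fin (k v - 1))) := by
    intro a b h
    simpa using h
  have hT : T.card = (k v - 1) + 1 := by
    rw [hTdef, Finset.card_insert_of_notMem (by simp), Finset.card_image_of_injective _ hinj,
      Finset.card_univ, Fintype.card_fin]
  by_cases hv : Sum.inl v ∈ C
  · -- some attached vertex is missing from C
    have hex : ∃ i, Sum.inr ⟨v, i⟩ ∉ C := by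
      by_contra h
      push_neg at h
      have h1 : 0 < k v - 1 := by have := hk v; omega
      set i0 : Fin (k v - 1) := ⟨0, h1⟩ with hi0
      have hsub : C.erase (Sum.inr ⟨v, i0⟩) ⊆ C := Finset.erase_subset _ _
      have hcov' : IsVertexCover (attachCliques G k) (C.erase (Sum.inr ⟨v, i0⟩)) := by
        intro a b hab
        by_cases ha : a = Sum.inr ⟨v, i0⟩
        · subst ha
          right
          rcases hnbr i0 b hab with rfl | ⟨j, rfl⟩
          · exact Finset.mem_erase.mpr ⟨by simp, hv⟩
          · exact Finset.mem_erase.mpr ⟨hab.ne', h j⟩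
        by_cases hb2 : b = Sum.inr ⟨v, i0⟩
        · subst hb2
          left
          rcases hnbr i0 a hab.symm with rfl | ⟨j, rfl⟩
          · exact Finset.mem_erase.mpr ⟨by simp, hv⟩
          · exact Finset.mem_erase.mpr ⟨hab.ne, h j⟩
        · rcases hcov hab with h1 | h1
          · exact Or.inl (Finset.mem_erase.mpr ⟨ha, h1⟩)
          · exact Or.inr (Finset.mem_erase.mpr ⟨hb2, h1⟩)
      have heq := hmin _ hsub hcov'
      have : Sum.inr ⟨v, i0⟩ ∈ C.erase (Sum.inr ⟨v, i0⟩) := by rw [heq]; exact h i0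
      simp at this
    obtain ⟨i, hi⟩ := hex
    have huniq : ∀ j, j ≠ i → Sum.inr ⟨v, j⟩ ∈ C := by
      intro j hj
      rcases hcov (hadj2 j i hj) with h1 | h1
      · exact h1
      · exact absurd h1 hi
    have hF : C.filter (fun w => f w = v) = T.erase (Sum.inr ⟨v, i⟩) := by
      ext w
      simp only [Finset.mem_filter, Finset.mem_erase, hTdef, Finset.mem_insert,
        Finset.mem_image, Finset.mem_univ, true_and]
      constructor
      · rintro ⟨hwC, hfw⟩
        rcases w with u | ⟨u, j⟩
        · simp only [f, Sum.elim_inl, id] at hfw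
          subst hfw
          exact ⟨by simp, Or.inl rfl⟩
        · simp only [f, Sum.elim_inr] at hfw
          subst hfw
          refine ⟨?_, Or.inr ⟨j, rfl⟩⟩
          intro heq
          rw [heq] at hwC
          exact hi hwC
      · rintro ⟨hne, rfl | ⟨j, rfl⟩⟩
        · exact ⟨hv, by simp [f]⟩
        · have hji : j ≠ i := by
            intro h; subst h; exact hne rfl
          exact ⟨huniq j hji, by simp [f]⟩
    rw [hF, Finset.card_erase_of_mem (by simp [hTdef]), hT]
    omega
  · have hall : ∀ j, Sum.inr ⟨v, j⟩ ∈ C := by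
      intro j
      rcases hcov (hadj1 j) with h1 | h1
      · exact absurd h1 hv
      · exact h1
    have hF : C.filter (fun w => f w = v) = T.erase (Sum.inl v) := by
      ext w
      simp only [Finset.mem_filter, Finset.mem_erase, hTdef, Finset.mem_insert,
        Finset.mem_image, Finset.mem_univ, true_and]
      constructor
      · rintro ⟨hwC, hfw⟩
        rcases w with u | ⟨u, j⟩
        · simp only [f, Sum.elim_inl, id] at hfw
          subst hfw
          exact absurd hwC hv
        · simp only [f, Sum.elim_inr] at hfw
          subst hfw
          exact ⟨by simp, Or.inr ⟨j, rfl⟩⟩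
      · rintro ⟨hne, rfl | ⟨j, rfl⟩⟩
        · exact absurd rfl hne
        · exact ⟨hall j, by simp [f]⟩
    rw [hF, Finset.card_erase_of_mem (by simp [hTdef]), hT]
    omega
end

section
/- Let $G$ be a finite simple graph on vertex set $V$ and let $G'$ be obtained from $G$ by attaching a whisker (a new pendant vertex joined by a single edge) to every vertex of $G$. Then every maximal independent set of $G'$ has cardinality $|V|$; in particular $G'$ is well-covered (unmixed). -/
/-- An independent set of a graph: a set of vertices no two of which are adjacent. -/
def IsIndepSet {V : Type*} (G : SimpleGraph V) (A : Finset V) : Prop :=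
  ∀ u ∈ A, ∀ v ∈ A, ¬ G.Adj u v

/-- A maximal independent set: an independent set not properly contained in another
independent set. -/
def IsMaxIndepSet {V : Type*} (G : SimpleGraph V) (A : Finset V) : Prop :=
  IsIndepSet G A ∧ ∀ B : Finset V, IsIndepSet G B → A ⊆ B → B = A

/-- The graph obtained from `G` by attaching a whisker (a new pendant vertex `Sum.inr v`
joined by a single edge) to every vertex `Sum.inl v` of `G`. -/
def addWhiskers {V : Type*} (G : SimpleGraph V) : SimpleGraph (V ⊕ V) :=
  SimpleGraph.fromRel (fun a b =>
    (∃ u w, a = Sum.inl u ∧ b = Sum.inl w ∧ G.Adj u w) ∨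
    (∃ v, a = Sum.inl v ∧ b = Sum.inr v))

/-! A maximal independent set of the whiskered graph meets every whisker `{inl v, inr v}` in
exactly one vertex: not in both, since they are adjacent, and in at least one, since otherwise
the pendant vertex `inr v`, whose only neighbour is `inl v`, could be added. The whiskers
partition the vertex set, so the set has `|V|` elements. -/

open Finset

theorem IsMaxIndepSet.exists_mem_adj_of_notMem {V : Type*} {G : SimpleGraph V} {A : Finset V}
    (hA : IsMaxIndepSet G A) {x : V} (hx : x ∉ A) : ∃ a ∈ A, G.Adj a x := by
  classical
  by_contra! hnadj
  have hindep : IsIndepSet G (insert x A) := by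
    intro u hu w hw
    rw [mem_insert] at hu hw
    rcases hu with rfl | hu <;> rcases hw with rfl | hw
    · exact G.irrefl
    · exact fun hadj => hnadj w hw hadj.symm
    · exact hnadj u hu
    · exact hA.1 u hu w hw
  exact hx (hA.2 _ hindep (subset_insert x A) ▸ mem_insert_self x A)

theorem addWhiskers_adj_inr_iff {V : Type*} {G : SimpleGraph V} {a : V ⊕ V} {v : V} :
    (addWhiskers G).Adj a (Sum.inr v) ↔ a = Sum.inl v := by
  cases a <;> simp [addWhiskers, eq_comm]

theorem IsMaxIndepSet.inl_mem_iff_inr_notMem_addWhiskers {V : Type*} {G : SimpleGraph V}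
    {A : Finset (V ⊕ V)} (hA : IsMaxIndepSet (addWhiskers G) A) (v : V) :
    Sum.inl v ∈ A ↔ Sum.inr v ∉ A := by
  refine ⟨fun hl hr => hA.1 _ hl _ hr (addWhiskers_adj_inr_iff.2 rfl), fun hr => ?_⟩
  obtain ⟨a, ha, hadj⟩ := hA.exists_mem_adj_of_notMem hr
  rwa [addWhiskers_adj_inr_iff.1 hadj] at ha

theorem Finset.card_eq_of_inl_mem_iff_inr_notMem {V : Type*} [Fintype V] {A : Finset (V ⊕ V)}
    (h : ∀ v, Sum.inl v ∈ A ↔ Sum.inr v ∉ A) : #A = Fintype.card V := by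
  classical
  have hright : A.toRight = A.toLeftᶜ := by
    ext v
    simp [h]
  rw [← card_toLeft_add_card_toRight, hright, card_add_card_compl]

theorem stmt6_general {V : Type*} [Fintype V] (G : SimpleGraph V)
    (A : Finset (V ⊕ V)) (hA : IsMaxIndepSet (addWhiskers G) A) :
    A.card = Fintype.card V :=
  card_eq_of_inl_mem_iff_inr_notMem hA.inl_mem_iff_inr_notMem_addWhiskers

/-- If `G'` is obtained from a finite simple graph `G` by attaching a whisker to every
vertex, then every maximal independent set of `G'` has cardinality `|V|`; in particular
`G'` is well-covered (unmixed). -/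
theorem stmt6 {V : Type*} [Fintype V] [DecidableEq V] (G : SimpleGraph V)
    (A : Finset (V ⊕ V)) (hA : IsMaxIndepSet (addWhiskers G) A) :
    A.card = Fintype.card V :=
  stmt6_general G A hA
end

section
/- Let $G'$ be the graph on vertex set $\{x_1,\ldots,x_n\} \cup \{y_1,z_1,\ldots,y_m,z_m\}$ obtained from a bipartite graph $B$ with parts $\{x_1,\ldots,x_n\}$ and $\{y_1,\ldots,y_m\}$ by adding the edges $\{y_j, z_j\}$ for $j = 1,\ldots,m$. Then a maximal independent set $A$ of $G'$ is uniquely determined by $A \cap \{y_1,\ldots,y_m\}$: for every subset $Y \subseteq \{y_1,\ldots,y_m\}$, the unique maximal independent set $A$ with $A \cap \{y_1,\ldots,y_m\} = Y$ is $Y \cup ((\{x_1,\ldots,x_n\} \cup \{z_1,\ldots,z_m\}) \setminus \bigcup_{y \in Y} N(y))$. Consequently, $G'$ has exactly $2^m$ maximal independent sets. -/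
open scoped Classical

def pendantGraph (n m : ℕ) (R : Fin n → Fin m → Prop) :
    SimpleGraph ((Fin n ⊕ Fin m) ⊕ Fin m) :=
  SimpleGraph.fromRel (fun a b =>
    (∃ i j, a = Sum.inl (Sum.inl i) ∧ b = Sum.inl (Sum.inr j) ∧ R i j) ∨
    (∃ j, a = Sum.inl (Sum.inr j) ∧ b = Sum.inr j))

noncomputable def candSet (n m : ℕ) (R : Fin n → Fin m → Prop) (Y : Finset (Fin m)) :
    Finset ((Fin n ⊕ Fin m) ⊕ Fin m) :=
  Finset.univ.filter (fun v => match v with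
    | Sum.inl (Sum.inr j) => j ∈ Y
    | Sum.inl (Sum.inl i) => ¬ ∃ j ∈ Y, R i j
    | Sum.inr j => j ∉ Y)

lemma adj_iff (n m : ℕ) (R : Fin n → Fin m → Prop) (a b) :
    (pendantGraph n m R).Adj a b ↔ a ≠ b ∧
    (((∃ i j, a = Sum.inl (Sum.inl i) ∧ b = Sum.inl (Sum.inr j) ∧ R i j) ∨
    (∃ j, a = Sum.inl (Sum.inr j) ∧ b = Sum.inr j)) ∨
    ((∃ i j, b = Sum.inl (Sum.inl i) ∧ a = Sum.inl (Sum.inr j) ∧ R i j) ∨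
    (∃ j, b = Sum.inl (Sum.inr j) ∧ a = Sum.inr j))) := by
  rw [pendantGraph, SimpleGraph.fromRel_adj]

lemma mem_cand_x (n m : ℕ) (R : Fin n → Fin m → Prop) (Y : Finset (Fin m)) (i : Fin n) :
    Sum.inl (Sum.inl i) ∈ candSet n m R Y ↔ ¬ ∃ j ∈ Y, R i j := by
  simp [candSet]

lemma mem_cand_y (n m : ℕ) (R : Fin n → Fin m → Prop) (Y : Finset (Fin m)) (j : Fin m) :
    Sum.inl (Sum.inr j) ∈ candSet n m R Y ↔ j ∈ Y := by
  simp [candSet]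

lemma mem_cand_z (n m : ℕ) (R : Fin n → Fin m → Prop) (Y : Finset (Fin m)) (j : Fin m) :
    Sum.inr j ∈ candSet n m R Y ↔ j ∉ Y := by
  simp [candSet]

lemma cand_indep (n m : ℕ) (R : Fin n → Fin m → Prop) (Y : Finset (Fin m)) :
    IsIndepSet (pendantGraph n m R) (candSet n m R Y) := by
  intro u hu v hv hadj
  rw [adj_iff] at hadj
  obtain ⟨hne, h⟩ := hadj
  rcases h with (⟨i, j, rfl, rfl, hR⟩ | ⟨j, rfl, rfl⟩) | (⟨i, j, rfl, rfl, hR⟩ | ⟨j, rfl, rfl⟩)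
  · rw [mem_cand_x] at hu; rw [mem_cand_y] at hv; exact hu ⟨j, hv, hR⟩
  · rw [mem_cand_y] at hu; rw [mem_cand_z] at hv; exact hv hu
  · rw [mem_cand_x] at hv; rw [mem_cand_y] at hu; exact hv ⟨j, hu, hR⟩
  · rw [mem_cand_y] at hv; rw [mem_cand_z] at hu; exact hu hv

lemma sub_cand (n m : ℕ) (R : Fin n → Fin m → Prop) (Y : Finset (Fin m))
    (A : Finset ((Fin n ⊕ Fin m) ⊕ Fin m)) (hA : IsIndepSet (pendantGraph n m R) A)
    (hY : ∀ j : Fin m, Sum.inl (Sum.inr j) ∈ A ↔ j ∈ Y) :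
    A ⊆ candSet n m R Y := by
  intro v hv
  match v with
  | Sum.inl (Sum.inr j) => rw [mem_cand_y]; exact (hY j).1 hv
  | Sum.inl (Sum.inl i) =>
      rw [mem_cand_x]
      rintro ⟨j, hj, hR⟩
      exact hA _ hv _ ((hY j).2 hj)
        ((adj_iff n m R _ _).2 ⟨by simp, Or.inl (Or.inl ⟨i, j, rfl, rfl, hR⟩)⟩)
  | Sum.inr j =>
      rw [mem_cand_z]
      intro hj
      exact hA _ ((hY j).2 hj) _ hv
        ((adj_iff n m R _ _).2 ⟨by simp, Or.inl (Or.inr ⟨j, rfl, rfl⟩)⟩)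

lemma cand_max (n m : ℕ) (R : Fin n → Fin m → Prop) (Y : Finset (Fin m)) :
    IsMaxIndepSet (pendantGraph n m R) (candSet n m R Y) := by
  refine ⟨cand_indep n m R Y, fun B hB hsub => ?_⟩
  have hY : ∀ j : Fin m, Sum.inl (Sum.inr j) ∈ B ↔ j ∈ Y := by
    intro j
    constructor
    · intro hj
      by_contra hjY
      have hz : Sum.inr j ∈ B := hsub ((mem_cand_z n m R Y j).2 hjY)
      exact hB _ hj _ hz ((adj_iff n m R _ _).2 ⟨by simp, Or.inl (Or.inr ⟨j, rfl, rfl⟩)⟩)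
    · intro hj; exact hsub ((mem_cand_y n m R Y j).2 hj)
  have := sub_cand n m R Y B hB hY
  exact Finset.Subset.antisymm this hsub

/-- A maximal independent set `A` of `G'` is uniquely determined by
`A ∩ {y₁,…,yₘ}`: for every `Y ⊆ {y₁,…,yₘ}` the set
`Y ∪ ((X ∪ Z) \ ⋃_{y ∈ Y} N(y))` is the unique maximal independent set meeting
`{y₁,…,yₘ}` in `Y`. Consequently `G'` has exactly `2^m` maximal independent sets. -/
theorem stmt9 (n m : ℕ) (R : Fin n → Fin m → Prop) :
    (∀ Y : Finset (Fin m),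
      IsMaxIndepSet (pendantGraph n m R) (candSet n m R Y) ∧
      (∀ j : Fin m, Sum.inl (Sum.inr j) ∈ candSet n m R Y ↔ j ∈ Y) ∧
      (∀ A : Finset ((Fin n ⊕ Fin m) ⊕ Fin m), IsMaxIndepSet (pendantGraph n m R) A →
        (∀ j : Fin m, Sum.inl (Sum.inr j) ∈ A ↔ j ∈ Y) → A = candSet n m R Y)) ∧
    Set.ncard {A : Finset ((Fin n ⊕ Fin m) ⊕ Fin m) |
      IsMaxIndepSet (pendantGraph n m R) A} = 2 ^ m := by
  have huniq : ∀ Y : Finset (Fin m),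
      ∀ A : Finset ((Fin n ⊕ Fin m) ⊕ Fin m), IsMaxIndepSet (pendantGraph n m R) A →
        (∀ j : Fin m, Sum.inl (Sum.inr j) ∈ A ↔ j ∈ Y) → A = candSet n m R Y := by
    intro Y A hA hY
    exact (hA.2 _ (cand_indep n m R Y) (sub_cand n m R Y A hA.1 hY)).symm
  refine ⟨fun Y => ⟨cand_max n m R Y, mem_cand_y n m R Y, huniq Y⟩, ?_⟩
  have hset : {A : Finset ((Fin n ⊕ Fin m) ⊕ Fin m) |
      IsMaxIndepSet (pendantGraph n m R) A} = Set.range (candSet n m R) := by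
    ext A
    simp only [Set.mem_setOf_eq, Set.mem_range]
    constructor
    · intro hA
      exact ⟨Finset.univ.filter (fun j => Sum.inl (Sum.inr j) ∈ A),
        (huniq _ A hA (by simp)).symm⟩
    · rintro ⟨Y, rfl⟩; exact cand_max n m R Y
  rw [hset]
  have hinj : Function.Injective (candSet n m R) := by
    intro Y₁ Y₂ h
    ext j
    rw [← mem_cand_y n m R Y₁ j, h, mem_cand_y]
  rw [← Set.image_univ, Set.ncard_image_of_injective _ hinj]
  simp [Set.ncard_univ]
end

section
/- Let $G'$ be a finite simple graph with vertex set identified with the variables of a polynomial ring $S'$ over a field $K$, let $J' = (x^2 : x \text{ a vertex})$ and $I(G')$ the edge ideal, and let $\mathbf{m}$ be the irrelevant maximal ideal of $S'$. Then the monomials $v \in S'$ with $v \notin J' + I(G')$ and $\mathbf{m} v \subseteq J' + I(G')$ are exactly the squarefree monomials whose supports are the maximal independent sets of $G'$. Hence $\dim_K \operatorname{Soc}(S'/(J'+I(G')))$ equals the number of maximal independent sets of $G'$. -/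
open MvPolynomial

/-- The ideal `J' + I(G')` generated by the squares of all the variables together with
the edge monomials of `G'`. -/
noncomputable def sqPlusEdgeIdeal (K : Type*) [Field K] {W : Type*} (G : SimpleGraph W) :
    Ideal (MvPolynomial W K) :=
  Ideal.span ({p | ∃ v : W, p = X v ^ 2} ∪
    {p | ∃ u v : W, G.Adj u v ∧ p = X u * X v})

/-- The irrelevant maximal ideal `𝔪 = (x_v : v)` of the polynomial ring. -/
noncomputable def irrelevantIdeal (K : Type*) [Field K] (W : Type*) :
    Ideal (MvPolynomial W K) :=
  Ideal.span (Set.range (X : W → MvPolynomial W K))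

/-- The socle `{x : T ∣ 𝔪 x = 0}` of the quotient `T = S'/A`, as a `K`-subspace. -/
noncomputable def socQuot (K : Type*) [Field K] {W : Type*}
    (A : Ideal (MvPolynomial W K)) :
    Submodule K (MvPolynomial W K ⧸ A) where
  carrier := {x | ∀ v : W, Ideal.Quotient.mk A (X v) * x = 0}
  add_mem' := by
    intro a b ha hb v
    rw [mul_add, ha v, hb v, add_zero]
  zero_mem' := by
    intro v
    exact mul_zero _
  smul_mem' := by
    intro c x hx v
    rw [mul_smul_comm, hx v, smul_zero]


set_option linter.unusedSectionVars false

section Aux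

variable {W : Type*} [DecidableEq W] (G : SimpleGraph W)

/-- The "bad" exponent vectors: those dominating a generator exponent. -/
abbrev BadExp (d : W →₀ ℕ) : Prop :=
  (∃ v, 2 ≤ d v) ∨ ∃ u v, G.Adj u v ∧ 1 ≤ d u ∧ 1 ≤ d v

def badSet : Set (W →₀ ℕ) :=
  {s | (∃ v, s = Finsupp.single v 2) ∨
    ∃ u v, G.Adj u v ∧ s = Finsupp.single u 1 + Finsupp.single v 1}

variable (K : Type*) [Field K]

lemma X_mul_X_eq (u v : W) : (X u * X v : MvPolynomial W K) =
    monomial (Finsupp.single u 1 + Finsupp.single v 1) 1 := by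
  rw [← pow_one (X u), ← pow_one (X v), X_pow_eq_monomial, X_pow_eq_monomial,
    monomial_mul, mul_one]

lemma sqPlusEdgeIdeal_eq :
    Ideal.span ({p | ∃ v : W, p = X v ^ 2} ∪
      {p | ∃ u v : W, G.Adj u v ∧ p = X u * X v} : Set (MvPolynomial W K)) =
      Ideal.span ((fun s => monomial s (1 : K)) '' badSet G) := by
  congr 1
  ext p
  constructor
  · rintro (⟨v, rfl⟩ | ⟨u, v, h, rfl⟩)
    · exact ⟨Finsupp.single v 2, Or.inl ⟨v, rfl⟩, (X_pow_eq_monomial).symm⟩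
    · exact ⟨Finsupp.single u 1 + Finsupp.single v 1, Or.inr ⟨u, v, h, rfl⟩,
        (X_mul_X_eq K u v).symm⟩
  · rintro ⟨s, (⟨v, rfl⟩ | ⟨u, v, h, rfl⟩), rfl⟩
    · exact Or.inl ⟨v, X_pow_eq_monomial.symm⟩
    · exact Or.inr ⟨u, v, h, (X_mul_X_eq K u v).symm⟩

lemma badSet_le_iff {d : W →₀ ℕ} : (∃ s ∈ badSet G, s ≤ d) ↔ BadExp G d := by
  constructor
  · rintro ⟨s, (⟨v, rfl⟩ | ⟨u, v, h, rfl⟩), hle⟩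
    · exact Or.inl ⟨v, by simpa using (Finsupp.single_le_iff).mp hle⟩
    · refine Or.inr ⟨u, v, h, ?_, ?_⟩
      · have := Finsupp.le_def.mp hle u
        simp [Finsupp.single_apply, h.ne'] at this
        omega
      · have := Finsupp.le_def.mp hle v
        simp [Finsupp.single_apply, h.ne] at this
        omega
  · rintro (⟨v, hv⟩ | ⟨u, v, h, hu, hv⟩)
    · exact ⟨Finsupp.single v 2, Or.inl ⟨v, rfl⟩, Finsupp.single_le_iff.mpr hv⟩
    · refine ⟨Finsupp.single u 1 + Finsupp.single v 1, Or.inr ⟨u, v, h, rfl⟩,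
        Finsupp.le_def.mpr fun x => ?_⟩
      rcases eq_or_ne x u with rfl | hxu
      · simpa [Finsupp.single_apply, h.ne'] using hu
      · rcases eq_or_ne x v with rfl | hxv
        · simpa [Finsupp.single_apply, h.ne] using hv
        · simp [Finsupp.single_apply, Ne.symm hxu, Ne.symm hxv]

lemma mem_span_bad_iff {p : MvPolynomial W K} :
    p ∈ Ideal.span ((fun s => monomial s (1 : K)) '' badSet G) ↔
      ∀ d ∈ p.support, BadExp G d := by
  rw [mem_ideal_span_monomial_image]
  exact forall₂_congr fun d _ => badSet_le_iff G

lemma monomial_mem_span_bad_iff {d : W →₀ ℕ} :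
    monomial d (1 : K) ∈ Ideal.span ((fun s => monomial s (1 : K)) '' badSet G) ↔
      BadExp G d := by
  classical
  rw [mem_span_bad_iff, support_monomial, if_neg one_ne_zero]
  simp

lemma not_badExp_iff {d : W →₀ ℕ} :
    ¬ BadExp G d ↔ (∀ v, d v ≤ 1) ∧ IsIndepSet G d.support := by
  constructor
  · intro h
    refine ⟨fun v => ?_, fun u hu v hv hadj => ?_⟩
    · by_contra hc
      exact h (Or.inl ⟨v, by omega⟩)
    · rw [Finsupp.mem_support_iff] at hu hv
      exact h (Or.inr ⟨u, v, hadj, by omega, by omega⟩)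
  · rintro ⟨h1, h2⟩ (⟨v, hv⟩ | ⟨u, v, hadj, hu, hv⟩)
    · exact absurd (h1 v) (by omega)
    · exact h2 u (Finsupp.mem_support_iff.mpr (by omega)) v
        (Finsupp.mem_support_iff.mpr (by omega)) hadj

lemma badExp_add_single_iff {d : W →₀ ℕ} (hd : ¬ BadExp G d) (v : W) :
    BadExp G (d + Finsupp.single v 1) ↔ v ∈ d.support ∨ ∃ u ∈ d.support, G.Adj u v := by
  obtain ⟨h1, -⟩ := (not_badExp_iff G).mp hd
  constructor
  · rintro (⟨w, hw⟩ | ⟨u, w, hadj, hu, hw⟩)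
    · rw [Finsupp.add_apply, Finsupp.single_apply] at hw
      have h1w := h1 w
      have hvw : v = w := by by_contra hne; simp [hne] at hw; omega
      subst hvw
      simp at hw
      exact Or.inl (Finsupp.mem_support_iff.mpr (by omega))
    · rw [Finsupp.add_apply, Finsupp.single_apply] at hu hw
      have h1u := h1 u; have h1w := h1 w
      by_cases huv : v = u
      · have hwv : ¬ v = w := fun hh => hadj.ne (by rw [← huv, ← hh])
        simp [hwv] at hw
        exact Or.inr ⟨w, Finsupp.mem_support_iff.mpr (by omega),
          by rw [huv]; exact hadj.symm⟩
      · simp [huv] at hu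
        by_cases hwv : v = w
        · exact Or.inr ⟨u, Finsupp.mem_support_iff.mpr (by omega),
            by rw [hwv]; exact hadj⟩
        · simp [hwv] at hw
          exact absurd (Or.inr ⟨u, w, hadj, by omega, by omega⟩) hd
  · rintro (hv | ⟨u, hu, hadj⟩)
    · rw [Finsupp.mem_support_iff] at hv
      exact Or.inl ⟨v, by simp [Finsupp.add_apply]; omega⟩
    · rw [Finsupp.mem_support_iff] at hu
      refine Or.inr ⟨u, v, hadj, ?_, ?_⟩
      · simp [Finsupp.add_apply, Finsupp.single_apply, hadj.ne]; omega
      · simp [Finsupp.add_apply]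

lemma isMaxIndepSet_iff {A : Finset W} (hA : IsIndepSet G A) :
    IsMaxIndepSet G A ↔ ∀ v, v ∈ A ∨ ∃ u ∈ A, G.Adj u v := by
  constructor
  · rintro ⟨-, hmax⟩ v
    by_cases hv : v ∈ A
    · exact Or.inl hv
    · by_contra hcon
      push_neg at hcon
      obtain ⟨-, hno⟩ := hcon
      have hind : IsIndepSet G (insert v A) := by
        intro x hx y hy hadj
        rcases Finset.mem_insert.mp hx with hx | hx
        · rcases Finset.mem_insert.mp hy with hy | hy
          · exact hadj.ne (hx.trans hy.symm)
          · exact hno y hy (by rw [← hx]; exact hadj.symm)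
        · rcases Finset.mem_insert.mp hy with hy | hy
          · exact hno x hx (by rw [← hy]; exact hadj)
          · exact hA x hx y hy hadj
      have := hmax _ hind (Finset.subset_insert v A)
      exact hv (this ▸ Finset.mem_insert_self v A)
  · intro h
    refine ⟨hA, fun B hB hAB => ?_⟩
    refine Finset.Subset.antisymm (fun v hv => ?_) hAB
    rcases h v with hvA | ⟨u, hu, hadj⟩
    · exact hvA
    · exact absurd hadj (hB u (hAB hu) v hv)

end Aux


section Aux2

variable {W : Type*} [DecidableEq W] (G : SimpleGraph W)

noncomputable def eIndic (A : Finset W) : W →₀ ℕ := ∑ v ∈ A, Finsupp.single v 1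

lemma eIndic_apply (A : Finset W) (x : W) : eIndic A x = if x ∈ A then 1 else 0 := by
  classical
  rw [eIndic, Finset.sum_apply']
  simp [Finsupp.single_apply]

lemma eIndic_support (A : Finset W) : (eIndic A).support = A := by
  ext x
  rw [Finsupp.mem_support_iff, eIndic_apply]
  split <;> simp_all

lemma eIndic_le_one (A : Finset W) (v : W) : eIndic A v ≤ 1 := by
  rw [eIndic_apply]; split <;> omega

lemma eIndic_of_sf {d : W →₀ ℕ} (h : ∀ v, d v ≤ 1) : eIndic d.support = d := by
  ext x
  rw [eIndic_apply]
  have := h x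
  by_cases hx : x ∈ d.support
  · rw [if_pos hx]
    have := Finsupp.mem_support_iff.mp hx
    omega
  · rw [if_neg hx]
    exact (Finsupp.notMem_support_iff.mp hx).symm

lemma eIndic_injective : Function.Injective (eIndic (W := W)) := fun A B h => by
  rw [← eIndic_support A, ← eIndic_support B, h]

end Aux2


section Main

variable {W : Type*} [Fintype W] [DecidableEq W] (G : SimpleGraph W) (K : Type*) [Field K]

lemma sq_eq : sqPlusEdgeIdeal K G = Ideal.span ((fun s => monomial s (1 : K)) '' badSet G) :=
  sqPlusEdgeIdeal_eq G K

lemma mem_sq_iff {p : MvPolynomial W K} :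
    p ∈ sqPlusEdgeIdeal K G ↔ ∀ d ∈ p.support, BadExp G d := by
  rw [sq_eq, mem_span_bad_iff]

lemma monomial_mem_sq_iff {d : W →₀ ℕ} :
    monomial d (1 : K) ∈ sqPlusEdgeIdeal K G ↔ BadExp G d := by
  rw [sq_eq, monomial_mem_span_bad_iff]

lemma X_mul_monomial_eq (v : W) (d : W →₀ ℕ) :
    (X v : MvPolynomial W K) * monomial d 1 = monomial (Finsupp.single v 1 + d) 1 := by
  rw [← pow_one (X v), X_pow_eq_monomial, monomial_mul, one_mul]

lemma mulAll_iff (d : W →₀ ℕ) :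
    (∀ p ∈ irrelevantIdeal K W, p * monomial d (1 : K) ∈ sqPlusEdgeIdeal K G) ↔
      ∀ v, BadExp G (d + Finsupp.single v 1) := by
  constructor
  · intro h v
    have hX : (X v : MvPolynomial W K) ∈ irrelevantIdeal K W :=
      Ideal.subset_span ⟨v, rfl⟩
    have := h _ hX
    rw [X_mul_monomial_eq, monomial_mem_sq_iff, add_comm] at this
    exact this
  · intro h p hp
    refine Submodule.span_induction (p := fun q _ => q * monomial d (1 : K) ∈ sqPlusEdgeIdeal K G)
      ?_ ?_ ?_ ?_ hp
    · rintro _ ⟨v, rfl⟩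
      rw [X_mul_monomial_eq, monomial_mem_sq_iff, add_comm]
      exact h v
    · show (0 : MvPolynomial W K) * monomial d 1 ∈ sqPlusEdgeIdeal K G
      rw [zero_mul]; exact Ideal.zero_mem _
    · intro x y _ _ hx hy
      show (x + y) * monomial d 1 ∈ sqPlusEdgeIdeal K G
      rw [add_mul]; exact Ideal.add_mem _ hx hy
    · intro a x _ hx
      show (a • x) * monomial d 1 ∈ sqPlusEdgeIdeal K G
      rw [smul_mul_assoc]
      exact Submodule.smul_mem _ a hx

lemma part1_iff (d : W →₀ ℕ) :
    (¬ BadExp G d ∧ ∀ v, BadExp G (d + Finsupp.single v 1)) ↔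
      ((∀ v : W, d v ≤ 1) ∧ IsMaxIndepSet G d.support) := by
  constructor
  · rintro ⟨hg, hall⟩
    obtain ⟨h1, h2⟩ := (not_badExp_iff G).mp hg
    exact ⟨h1, (isMaxIndepSet_iff G h2).mpr fun v => (badExp_add_single_iff G hg v).mp (hall v)⟩
  · rintro ⟨h1, hmax⟩
    have hg : ¬ BadExp G d := (not_badExp_iff G).mpr ⟨h1, hmax.1⟩
    exact ⟨hg, fun v => (badExp_add_single_iff G hg v).mpr
      (((isMaxIndepSet_iff G hmax.1).mp hmax) v)⟩

/-- The socle generators family. -/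
noncomputable def socFam : {A : Finset W // IsMaxIndepSet G A} →
    (MvPolynomial W K ⧸ sqPlusEdgeIdeal K G) :=
  fun A => Ideal.Quotient.mk (sqPlusEdgeIdeal K G) (monomial (eIndic A.1) 1)

lemma socFam_good (A : {A : Finset W // IsMaxIndepSet G A}) :
    ¬ BadExp G (eIndic A.1) ∧ ∀ v, BadExp G (eIndic A.1 + Finsupp.single v 1) := by
  rw [part1_iff]
  refine ⟨eIndic_le_one A.1, ?_⟩
  rw [eIndic_support]
  exact A.2

lemma as_sum_smul (p : MvPolynomial W K) :
    p = ∑ d ∈ p.support, coeff d p • monomial d (1 : K) := by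
  conv_lhs => rw [p.as_sum]
  refine Finset.sum_congr rfl fun d _ => ?_
  rw [smul_monomial, smul_eq_mul, mul_one]

lemma socQuot_eq_span :
    socQuot K (sqPlusEdgeIdeal K G) = Submodule.span K (Set.range (socFam G K)) := by
  apply le_antisymm
  · intro x hx
    obtain ⟨p, rfl⟩ := Ideal.Quotient.mk_surjective x
    have hXv : ∀ v, (X v : MvPolynomial W K) * p ∈ sqPlusEdgeIdeal K G := by
      intro v
      have := hx v
      rwa [← map_mul, Ideal.Quotient.eq_zero_iff_mem] at this
    have key : ∀ d ∈ p.support, BadExp G d ∨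
        (¬ BadExp G d ∧ ∀ v, BadExp G (d + Finsupp.single v 1)) := by
      intro d hdp
      by_cases hb : BadExp G d
      · exact Or.inl hb
      · refine Or.inr ⟨hb, fun v => ?_⟩
        have hmem := (mem_sq_iff G K).mp (hXv v)
        have hsupp : Finsupp.single v 1 + d ∈ (X v * p).support := by
          rw [MvPolynomial.mem_support_iff, coeff_X_mul]
          exact MvPolynomial.mem_support_iff.mp hdp
        have := hmem _ hsupp
        rwa [add_comm] at this
    have hp : (Ideal.Quotient.mkₐ K (sqPlusEdgeIdeal K G)) p =
        ∑ d ∈ p.support, coeff d p •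
          (Ideal.Quotient.mkₐ K (sqPlusEdgeIdeal K G)) (monomial d 1) := by
      conv_lhs => rw [as_sum_smul K p]
      rw [map_sum]
      exact Finset.sum_congr rfl fun d _ => by rw [map_smul]
    have hmk : Ideal.Quotient.mk (sqPlusEdgeIdeal K G) p =
        (Ideal.Quotient.mkₐ K (sqPlusEdgeIdeal K G)) p := rfl
    rw [hmk, hp]
    refine Submodule.sum_mem _ fun d hd => ?_
    rcases key d hd with hb | ⟨hg, hall⟩
    · have : (Ideal.Quotient.mkₐ K (sqPlusEdgeIdeal K G)) (monomial d (1 : K)) = 0 := by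
        rw [Ideal.Quotient.mkₐ_eq_mk, Ideal.Quotient.eq_zero_iff_mem]
        exact (monomial_mem_sq_iff G K).mpr hb
      rw [this, smul_zero]
      exact Submodule.zero_mem _
    · obtain ⟨h1, hmax⟩ := (part1_iff G d).mp ⟨hg, hall⟩
      refine Submodule.smul_mem _ _ (Submodule.subset_span ?_)
      refine ⟨⟨d.support, hmax⟩, ?_⟩
      show Ideal.Quotient.mk _ (monomial (eIndic d.support) 1) = _
      rw [eIndic_of_sf h1]
      rfl
  · rw [Submodule.span_le]
    rintro _ ⟨A, rfl⟩
    intro v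
    show Ideal.Quotient.mk _ (X v) * Ideal.Quotient.mk _ (monomial (eIndic A.1) 1) = 0
    rw [← map_mul, Ideal.Quotient.eq_zero_iff_mem, X_mul_monomial_eq, monomial_mem_sq_iff,
      add_comm]
    exact (socFam_good G A).2 v

lemma socFam_linearIndependent : LinearIndependent K (socFam G K) := by
  rw [linearIndependent_iff']
  intro s g hsum i hi
  set p : MvPolynomial W K := ∑ j ∈ s, g j • monomial (eIndic j.1) 1 with hpdef
  have hpI : p ∈ sqPlusEdgeIdeal K G := by
    rw [← Ideal.Quotient.eq_zero_iff_mem]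
    have : Ideal.Quotient.mk (sqPlusEdgeIdeal K G) p =
        (Ideal.Quotient.mkₐ K (sqPlusEdgeIdeal K G)) p := rfl
    rw [this, hpdef, map_sum]
    have : ∀ j ∈ s, (Ideal.Quotient.mkₐ K (sqPlusEdgeIdeal K G)) (g j • monomial (eIndic j.1) 1)
        = g j • socFam G K j := fun j _ => by rw [map_smul]; rfl
    rw [Finset.sum_congr rfl this]
    exact hsum
  by_contra hgi
  have hcoeff : coeff (eIndic i.1) p = g i := by
    rw [hpdef, coeff_sum]
    rw [Finset.sum_eq_single_of_mem i hi]
    · rw [coeff_smul, coeff_monomial, if_pos rfl, smul_eq_mul, mul_one]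
    · intro j _ hji
      rw [coeff_smul, coeff_monomial, if_neg, smul_eq_mul, mul_zero]
      intro he
      exact hji (Subtype.ext (eIndic_injective he))
  have hsupp : eIndic i.1 ∈ p.support := MvPolynomial.mem_support_iff.mpr (by rw [hcoeff]; exact hgi)
  have hbad := (mem_sq_iff G K).mp hpI _ hsupp
  have : ¬ BadExp G (eIndic i.1) := (socFam_good G i).1
  exact this hbad

end Main

/-- The monomials `v` with `v ∉ J' + I(G')` and `𝔪 v ⊆ J' + I(G')` are exactly the
squarefree monomials whose supports are the maximal independent sets of `G'`; hence
`dim_K Soc(S'/(J'+I(G')))` equals the number of maximal independent sets of `G'`. -/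
theorem stmt11 (K : Type*) [Field K] {W : Type*} [Fintype W] [DecidableEq W]
    (G : SimpleGraph W) :
    (∀ d : W →₀ ℕ,
      ((monomial d (1 : K) ∉ sqPlusEdgeIdeal K G) ∧
        ∀ p ∈ irrelevantIdeal K W, p * monomial d (1 : K) ∈ sqPlusEdgeIdeal K G) ↔
      ((∀ v : W, d v ≤ 1) ∧ IsMaxIndepSet G d.support)) ∧
    Module.finrank K (socQuot K (sqPlusEdgeIdeal K G)) =
      Set.ncard {A : Finset W | IsMaxIndepSet G A} := by
  constructor
  · intro d
    rw [mulAll_iff G K d, ← part1_iff G d]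
    constructor
    · rintro ⟨h1, h2⟩
      exact ⟨fun hb => h1 ((monomial_mem_sq_iff G K).mpr hb), h2⟩
    · rintro ⟨h1, h2⟩
      exact ⟨fun hm => h1 ((monomial_mem_sq_iff G K).mp hm), h2⟩
  · haveI : Fintype {A : Finset W // IsMaxIndepSet G A} := Fintype.ofFinite _
    rw [socQuot_eq_span G K, finrank_span_eq_card (socFam_linearIndependent G K),
      ← Nat.card_coe_set_eq, ← Nat.card_eq_fintype_card]
    exact Nat.card_congr (Equiv.subtypeEquivRight fun A => Iff.rfl)
end

section
/- Every Cameron--Walker graph is vertex decomposable; in particular its independence complex is shellable and sequentially Cohen--Macaulay. -/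
open scoped Classical

/-- Vertex type of a Cameron--Walker graph: the bipartition classes `Fin n` and `Fin m`
of the supporting bipartite graph, the leaves (the `l`-th leaf attached to the `i`-th
vertex of `X` is `⟨i, l⟩`), and the pairs of degree-2 vertices of the pendant triangles
(the `l`-th triangle attached to the `j`-th vertex of `Y` has vertices `⟨j, l, true⟩`
and `⟨j, l, false⟩`). -/
abbrev CWVert (n m : ℕ) (f : Fin n → ℕ) (t : Fin m → ℕ) : Type :=
  (Fin n ⊕ Fin m) ⊕ ((Σ i : Fin n, Fin (f i)) ⊕ (Σ j : Fin m, Fin (t j) × Bool))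

/-- The Cameron--Walker graph determined by a bipartite adjacency relation
`R : Fin n → Fin m → Prop` between the parts `X = Fin n` and `Y = Fin m`,
with `f i` leaves attached to the `i`-th vertex of `X` and `t j` pendant triangles
attached to the `j`-th vertex of `Y`. -/
def cwGraph (n m : ℕ) (f : Fin n → ℕ) (t : Fin m → ℕ) (R : Fin n → Fin m → Prop) :
    SimpleGraph (CWVert n m f t) :=
  SimpleGraph.fromRel (fun a b =>
    (∃ i j, a = Sum.inl (Sum.inl i) ∧ b = Sum.inl (Sum.inr j) ∧ R i j) ∨
    (∃ (i : Fin n) (l : Fin (f i)), a = Sum.inl (Sum.inl i) ∧ b = Sum.inr (Sum.inl ⟨i, l⟩)) ∨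
    (∃ (j : Fin m) (p : Fin (t j) × Bool),
      a = Sum.inl (Sum.inr j) ∧ b = Sum.inr (Sum.inr ⟨j, p⟩)) ∨
    (∃ (j : Fin m) (l : Fin (t j)),
      a = Sum.inr (Sum.inr ⟨j, (l, true)⟩) ∧ b = Sum.inr (Sum.inr ⟨j, (l, false)⟩)))

/-- The closed neighbourhood `N[v]` of a vertex, as a finset. -/
noncomputable def closedNbhd {V : Type*} [Fintype V] (G : SimpleGraph V) (v : V) :
    Finset V :=
  Finset.univ.filter (fun w => w = v ∨ G.Adj v w)

/-- An independent set of the induced subgraph of `G` on the finset `S`,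
i.e. a face of the independence complex of `G ∖ (V ∖ S)`. -/
def IsIndepIn {V : Type*} (G : SimpleGraph V) (S A : Finset V) : Prop :=
  A ⊆ S ∧ ∀ u ∈ A, ∀ v ∈ A, ¬ G.Adj u v

/-- A maximal independent set (facet of the independence complex) of the induced
subgraph of `G` on `S`. -/
def IsMaxIndepIn {V : Type*} (G : SimpleGraph V) (S A : Finset V) : Prop :=
  IsIndepIn G S A ∧ ∀ B : Finset V, IsIndepIn G S B → A ⊆ B → B = A

/-- Vertex decomposability of (the independence complex of) the induced subgraph of `G`
on the vertex set `S`: either there are no edges (the independence complex is a simplex),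
or some vertex `v ∈ S` is a shedding vertex: `G ∖ v` and `G ∖ N[v]` are vertex
decomposable, and no independent set of `G ∖ N[v]` is a maximal independent set of
`G ∖ v`. -/
noncomputable def VDOn {V : Type*} [Fintype V] [DecidableEq V] (G : SimpleGraph V) :
    Finset V → Prop := fun S =>
  (∀ u ∈ S, ∀ v ∈ S, ¬ G.Adj u v) ∨
  ∃ v, ∃ _h : v ∈ S,
    VDOn G (S.erase v) ∧
    VDOn G (S \ closedNbhd G v) ∧
    ∀ A : Finset V, IsIndepIn G (S \ closedNbhd G v) A →
      ¬ IsMaxIndepIn G (S.erase v) A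
termination_by S => S.card
decreasing_by
  · exact Finset.card_lt_card (Finset.erase_ssubset _h)
  · refine Finset.card_lt_card
      ((Finset.ssubset_iff_of_subset Finset.sdiff_subset).mpr ⟨v, _h, ?_⟩)
    simp [closedNbhd]

/-!
If `u` is adjacent to a vertex `v` with `N[v] ⊆ N[u]`, then `u` is a shedding vertex: an
independent set of `G ∖ N[u]` stays independent in `G ∖ u` after adding `v`. In a
Cameron--Walker graph such a pair exists in every induced subgraph that has an edge and keeps
a leaf at each of its `X`-vertices: an `X`-vertex dominates its leaf, a triangle vertex
dominates its partner, and a `Y`-vertex dominates a triangle vertex whose partner is gone.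
Deleting a non-leaf vertex, or its closed neighbourhood, keeps a leaf at each `X`-vertex, so
induction on the vertex set gives vertex decomposability.
-/

section VertexDecomposable

variable {V : Type*} [Fintype V] {G : SimpleGraph V}

theorem mem_closedNbhd {u w : V} : w ∈ closedNbhd G u ↔ w = u ∨ G.Adj u w := by
  simp [closedNbhd]

def DominatesNeighborIn (G : SimpleGraph V) (S : Finset V) (u : V) : Prop :=
  ∃ v ∈ S, G.Adj u v ∧ ∀ w ∈ S, G.Adj v w → w ∈ closedNbhd G u

variable [DecidableEq V]

theorem sdiff_closedNbhd_subset_erase (S : Finset V) (u : V) :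
    S \ closedNbhd G u ⊆ S.erase u := fun _ hw =>
  have ⟨hwS, hwN⟩ := Finset.mem_sdiff.1 hw
  Finset.mem_erase.2 ⟨fun h => hwN (mem_closedNbhd.2 (.inl h)), hwS⟩

theorem sdiff_closedNbhd_ssubset {S : Finset V} {u : V} (hu : u ∈ S) :
    S \ closedNbhd G u ⊂ S :=
  (sdiff_closedNbhd_subset_erase S u).trans_ssubset (Finset.erase_ssubset hu)

theorem DominatesNeighborIn.not_isMaxIndepIn {S A : Finset V} {u : V}
    (hu : DominatesNeighborIn G S u) (hA : IsIndepIn G (S \ closedNbhd G u) A) :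
    ¬ IsMaxIndepIn G (S.erase u) A := by
  obtain ⟨v, hvS, huv, hdom⟩ := hu
  obtain ⟨hAS, hAind⟩ := hA
  rintro ⟨-, hmax⟩
  have hvA : v ∉ A := fun hv => (Finset.mem_sdiff.1 (hAS hv)).2 (mem_closedNbhd.2 (.inr huv))
  have hvA' : ∀ w ∈ A, ¬ G.Adj v w := fun w hw hvw =>
    (Finset.mem_sdiff.1 (hAS hw)).2 (hdom w (Finset.mem_sdiff.1 (hAS hw)).1 hvw)
  have hB : IsIndepIn G (S.erase u) (insert v A) := by
    refine ⟨Finset.insert_subset (Finset.mem_erase.2 ⟨huv.ne', hvS⟩)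
      (hAS.trans (sdiff_closedNbhd_subset_erase S u)), ?_⟩
    simp only [Finset.mem_insert]
    rintro a (rfl | ha) b (rfl | hb)
    · exact G.irrefl
    · exact hvA' b hb
    · exact fun h => hvA' a ha h.symm
    · exact hAind a ha b hb
  exact hvA (hmax _ hB (Finset.subset_insert v A) ▸ Finset.mem_insert_self v A)

theorem vdOn_of_forall_dominatesNeighborIn (P : Finset V → Prop)
    (hP : ∀ S, P S → ∀ a ∈ S, ∀ b ∈ S, G.Adj a b →
      ∃ u ∈ S, DominatesNeighborIn G S u ∧ P (S.erase u) ∧ P (S \ closedNbhd G u))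
    (S : Finset V) (hS : P S) : VDOn G S := by
  induction S using Finset.strongInduction with
  | H S ih =>
  rw [VDOn]
  by_cases hE : ∀ a ∈ S, ∀ b ∈ S, ¬ G.Adj a b
  · exact .inl hE
  push Not at hE
  obtain ⟨a, ha, b, hb, hab⟩ := hE
  obtain ⟨u, hu, hdom, herase, hsdiff⟩ := hP S hS a ha b hb hab
  exact .inr ⟨u, hu, ih _ (Finset.erase_ssubset hu) herase,
    ih _ (sdiff_closedNbhd_ssubset hu) hsdiff, fun _ hA => hdom.not_isMaxIndepIn hA⟩

end VertexDecomposable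

namespace CWVert

variable {n m : ℕ} {f : Fin n → ℕ} {t : Fin m → ℕ} {R : Fin n → Fin m → Prop}

def x (i : Fin n) : CWVert n m f t := .inl (.inl i)
def y (j : Fin m) : CWVert n m f t := .inl (.inr j)
def leaf (i : Fin n) (l : Fin (f i)) : CWVert n m f t := .inr (.inl ⟨i, l⟩)
def tri (j : Fin m) (p : Fin (t j) × Bool) : CWVert n m f t := .inr (.inr ⟨j, p⟩)

theorem cwGraph_adj_leaf_iff {i : Fin n} {l : Fin (f i)} {w : CWVert n m f t} :
    (cwGraph n m f t R).Adj (leaf i l) w ↔ w = x i := by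
  constructor
  · intro h
    simp [cwGraph, leaf] at h
    aesop
  · rintro rfl; simp [cwGraph, leaf, x]

theorem cwGraph_adj_tri_iff {j : Fin m} {l : Fin (t j)} {b : Bool} {w : CWVert n m f t} :
    (cwGraph n m f t R).Adj (tri j (l, b)) w ↔ w = y j ∨ w = tri j (l, !b) := by
  constructor
  · intro h
    simp [cwGraph, tri] at h
    aesop
  · rintro (rfl | rfl) <;> cases b <;> simp [cwGraph, tri, y]
    · exact Or.inr ⟨j, l, ⟨rfl, .rfl⟩, rfl, .rfl⟩
    · exact Or.inl ⟨j, l, ⟨rfl, .rfl⟩, rfl, .rfl⟩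

theorem cwGraph_adj_x_or_tri {a b : CWVert n m f t} (h : (cwGraph n m f t R).Adj a b) :
    (∃ i, a = x i ∨ b = x i) ∨ ∃ j p, a = tri j p ∨ b = tri j p := by
  simp [cwGraph] at h
  aesop (add norm x, norm tri)

def IsLeaf (u : CWVert n m f t) : Prop := ∃ i l, u = leaf i l

def HasLeaves (S : Finset (CWVert n m f t)) : Prop := ∀ i, x i ∈ S → ∃ l, leaf i l ∈ S

variable {S : Finset (CWVert n m f t)}

theorem HasLeaves.erase (hS : HasLeaves S) {u : CWVert n m f t} (hu : ¬ u.IsLeaf) :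
    HasLeaves (S.erase u) := fun i hi =>
  have ⟨l, hl⟩ := hS i (Finset.mem_of_mem_erase hi)
  ⟨l, Finset.mem_erase.2 ⟨fun h => hu ⟨i, l, h.symm⟩, hl⟩⟩

theorem HasLeaves.sdiff_closedNbhd (hS : HasLeaves S) {u : CWVert n m f t} (hu : ¬ u.IsLeaf) :
    HasLeaves (S \ closedNbhd (cwGraph n m f t R) u) := by
  intro i hi
  obtain ⟨hiS, hiN⟩ := Finset.mem_sdiff.1 hi
  obtain ⟨l, hl⟩ := hS i hiS
  refine ⟨l, Finset.mem_sdiff.2 ⟨hl, fun hlN => ?_⟩⟩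
  rcases mem_closedNbhd.1 hlN with h | h
  · exact hu ⟨i, l, h.symm⟩
  · rw [cwGraph_adj_leaf_iff.1 h.symm] at hiN
    exact hiN (mem_closedNbhd.2 (.inl rfl))

theorem dominatesNeighborIn_x (hS : HasLeaves S) {i : Fin n} (hi : x i ∈ S) :
    DominatesNeighborIn (cwGraph n m f t R) S (x i) := by
  obtain ⟨l, hl⟩ := hS i hi
  refine ⟨leaf i l, hl, (cwGraph_adj_leaf_iff.2 rfl).symm, fun w _ hw => ?_⟩
  exact mem_closedNbhd.2 (.inl (cwGraph_adj_leaf_iff.1 hw))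

theorem exists_dominatesNeighborIn_of_tri {j : Fin m} {l : Fin (t j)} {b : Bool}
    {w : CWVert n m f t} (hT : tri j (l, b) ∈ S) (hw : w ∈ S)
    (hadj : (cwGraph n m f t R).Adj (tri j (l, b)) w) :
    ∃ u ∈ S, ¬ u.IsLeaf ∧ DominatesNeighborIn (cwGraph n m f t R) S u := by
  by_cases hT' : tri j (l, !b) ∈ S
  · refine ⟨tri j (l, b), hT, by simp [IsLeaf, tri, leaf], tri j (l, !b), hT',
      cwGraph_adj_tri_iff.2 (.inr rfl), fun w _ hw => mem_closedNbhd.2 ?_⟩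
    rcases cwGraph_adj_tri_iff.1 hw with rfl | rfl
    · exact .inr (cwGraph_adj_tri_iff.2 (.inl rfl))
    · exact .inl (by rw [Bool.not_not])
  · obtain rfl : w = y j :=
      (cwGraph_adj_tri_iff.1 hadj).resolve_right (by rintro rfl; exact hT' hw)
    refine ⟨y j, hw, by simp [IsLeaf, y, leaf], tri j (l, b), hT, hadj.symm, fun w hwS hw => ?_⟩
    rcases cwGraph_adj_tri_iff.1 hw with rfl | rfl
    · exact mem_closedNbhd.2 (.inl rfl)
    · exact absurd hwS hT'

theorem HasLeaves.exists_dominatesNeighborIn (hS : HasLeaves S) {a b : CWVert n m f t}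
    (ha : a ∈ S) (hb : b ∈ S) (hab : (cwGraph n m f t R).Adj a b) :
    ∃ u ∈ S, ¬ u.IsLeaf ∧ DominatesNeighborIn (cwGraph n m f t R) S u := by
  rcases cwGraph_adj_x_or_tri hab with ⟨i, rfl | rfl⟩ | ⟨j, ⟨l, c⟩, rfl | rfl⟩
  · exact ⟨x i, ha, by simp [IsLeaf, x, leaf], dominatesNeighborIn_x hS ha⟩
  · exact ⟨x i, hb, by simp [IsLeaf, x, leaf], dominatesNeighborIn_x hS hb⟩
  · exact exists_dominatesNeighborIn_of_tri ha hb hab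
  · exact exists_dominatesNeighborIn_of_tri hb ha hab.symm

end CWVert

theorem stmt15_general (n m : ℕ) (f : Fin n → ℕ) (t : Fin m → ℕ) (R : Fin n → Fin m → Prop)
    (hf : ∀ i, 1 ≤ f i) :
    VDOn (cwGraph n m f t R) Finset.univ := by
  refine vdOn_of_forall_dominatesNeighborIn CWVert.HasLeaves (fun S hS a ha b hb hab => ?_) _
    fun i _ => ⟨⟨0, hf i⟩, Finset.mem_univ _⟩
  obtain ⟨u, hu, hleaf, hdom⟩ := hS.exists_dominatesNeighborIn ha hb hab
  exact ⟨u, hu, hdom, hS.erase hleaf, hS.sdiff_closedNbhd hleaf⟩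

/-- Every Cameron--Walker graph is vertex decomposable (hence its independence complex is
shellable and sequentially Cohen--Macaulay). -/
theorem stmt15 (n m : ℕ) (f : Fin n → ℕ) (t : Fin m → ℕ) (R : Fin n → Fin m → Prop)
    (hf : ∀ i, 1 ≤ f i) (hconn : (cwGraph n m f t R).Connected) :
    VDOn (cwGraph n m f t R) Finset.univ :=
  stmt15_general n m f t R hf
end

section
/- Let $G$ be a Cameron--Walker graph on vertex set $V$ consisting of a connected bipartite graph with parts $X \sqcup Y$, exactly one leaf attached to each vertex of $X$, and exactly one pendant triangle attached to each vertex of $Y$ (so $G$ is Cohen--Macaulay). Then $X$ together with the set of all degree-2 triangle vertices from one fixed choice per triangle, namely $X \cup \{z_j : j\} \cup \{w_j : j\}$, is a minimum vertex cover, i.e., the vertex cover number of $G$ equals $|X| + 2|Y|$. -/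
open scoped Classical

/-- The set consisting of `X` together with the two degree-2 vertices of every pendant
triangle (one fixed triangle per vertex of `Y`). -/
noncomputable def cmCover (n m : ℕ) : Finset (CWVert n m (fun _ => 1) (fun _ => 1)) :=
  Finset.univ.filter (fun v => match v with
    | Sum.inl (Sum.inl _) => True
    | Sum.inr (Sum.inr _) => True
    | _ => False)

/-- Classifying map sending each vertex to the index of its `X`- or `Y`-block. -/
def cwClass (n m : ℕ) : CWVert n m (fun _ => 1) (fun _ => 1) → Fin n ⊕ Fin m
  | Sum.inl (Sum.inl i) => Sum.inl i
  | Sum.inl (Sum.inr j) => Sum.inr j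
  | Sum.inr (Sum.inl ⟨i, _⟩) => Sum.inl i
  | Sum.inr (Sum.inr ⟨j, _⟩) => Sum.inr j

/-- For the Cohen--Macaulay Cameron--Walker graph (exactly one leaf at each vertex of
`X`, exactly one pendant triangle at each vertex of `Y`), the set `X ∪ {z_j} ∪ {w_j}` is
a minimum vertex cover: it is a vertex cover of cardinality `|X| + 2|Y| = n + 2m`, and
every vertex cover has cardinality at least `n + 2m`; hence the vertex cover number of
`G` equals `|X| + 2|Y|`. -/
theorem stmt18 (n m : ℕ) (R : Fin n → Fin m → Prop)
    (hconn : (cwGraph n m (fun _ => 1) (fun _ => 1) R).Connected) :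
    IsVertexCover (cwGraph n m (fun _ => 1) (fun _ => 1) R) (cmCover n m) ∧
    (cmCover n m).card = n + 2 * m ∧
    ∀ C : Finset (CWVert n m (fun _ => 1) (fun _ => 1)),
      IsVertexCover (cwGraph n m (fun _ => 1) (fun _ => 1) R) C →
        n + 2 * m ≤ C.card := by
  refine ⟨?_, ?_, ?_⟩
  · -- vertex cover
    intro u v huv
    rw [cwGraph, SimpleGraph.fromRel_adj] at huv
    obtain ⟨hne, h | h⟩ := huv <;>
      rcases h with ⟨i, j, ha, hb, _⟩ | ⟨i, l, ha, hb⟩ | ⟨j, p, ha, hb⟩ | ⟨j, l, ha, hb⟩ <;>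
      subst ha <;> subst hb <;> simp [cmCover]
  · -- cardinality
    rw [cmCover, Finset.card_filter]
    rw [Fintype.sum_sum_type, Fintype.sum_sum_type, Fintype.sum_sum_type]
    simp [Finset.sum_const, mul_comm, Finset.sum_sigma']
  · -- lower bound
    intro C hC
    have key := Finset.card_eq_sum_card_fiberwise
      (f := cwClass n m) (s := C) (t := Finset.univ) (fun x _ => Finset.mem_univ _)
    rw [key, Fintype.sum_sum_type]
    have hX : ∀ i : Fin n,
        1 ≤ (C.filter (fun x => cwClass n m x = Sum.inl i)).card := by
      intro i
      rw [Nat.one_le_iff_ne_zero, ← Nat.pos_iff_ne_zero, Finset.card_pos]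
      have hadj : (cwGraph n m (fun _ => 1) (fun _ => 1) R).Adj
          (Sum.inl (Sum.inl i)) (Sum.inr (Sum.inl ⟨i, 0⟩)) := by
        rw [cwGraph, SimpleGraph.fromRel_adj]
        exact ⟨by simp, Or.inl (Or.inr (Or.inl ⟨i, 0, rfl, rfl⟩))⟩
      rcases hC hadj with h | h
      · exact ⟨_, Finset.mem_filter.2 ⟨h, rfl⟩⟩
      · exact ⟨_, Finset.mem_filter.2 ⟨h, rfl⟩⟩
    have hY : ∀ j : Fin m,
        2 ≤ (C.filter (fun x => cwClass n m x = Sum.inr j)).card := by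
      intro j
      have hadjzw : (cwGraph n m (fun _ => 1) (fun _ => 1) R).Adj
          (Sum.inr (Sum.inr ⟨j, (0, true)⟩)) (Sum.inr (Sum.inr ⟨j, (0, false)⟩)) := by
        rw [cwGraph, SimpleGraph.fromRel_adj]
        exact ⟨by simp, Or.inl (Or.inr (Or.inr (Or.inr ⟨j, 0, rfl, rfl⟩)))⟩
      have hadjyz : (cwGraph n m (fun _ => 1) (fun _ => 1) R).Adj
          (Sum.inl (Sum.inr j)) (Sum.inr (Sum.inr ⟨j, (0, true)⟩)) := by
        rw [cwGraph, SimpleGraph.fromRel_adj]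
        exact ⟨by simp, Or.inl (Or.inr (Or.inr (Or.inl ⟨j, (0, true), rfl, rfl⟩)))⟩
      have hadjyw : (cwGraph n m (fun _ => 1) (fun _ => 1) R).Adj
          (Sum.inl (Sum.inr j)) (Sum.inr (Sum.inr ⟨j, (0, false)⟩)) := by
        rw [cwGraph, SimpleGraph.fromRel_adj]
        exact ⟨by simp, Or.inl (Or.inr (Or.inr (Or.inl ⟨j, (0, false), rfl, rfl⟩)))⟩
      rw [show (2 : ℕ) = 1 + 1 from rfl, Nat.add_one_le_iff, Finset.one_lt_card]
      by_cases hy : Sum.inl (Sum.inr j) ∈ C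
      · rcases hC hadjzw with h | h
        · exact ⟨_, Finset.mem_filter.2 ⟨hy, rfl⟩, _, Finset.mem_filter.2 ⟨h, rfl⟩, by simp⟩
        · exact ⟨_, Finset.mem_filter.2 ⟨hy, rfl⟩, _, Finset.mem_filter.2 ⟨h, rfl⟩, by simp⟩
      · have hz := (hC hadjyz).resolve_left hy
        have hw := (hC hadjyw).resolve_left hy
        exact ⟨_, Finset.mem_filter.2 ⟨hz, rfl⟩, _, Finset.mem_filter.2 ⟨hw, rfl⟩, by simp⟩
    calc n + 2 * m = (∑ _i : Fin n, 1) + ∑ _j : Fin m, 2 := by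
          simp [Finset.sum_const, mul_comm]
      _ ≤ _ := add_le_add (Finset.sum_le_sum fun i _ => hX i)
          (Finset.sum_le_sum fun j _ => hY j)
end
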